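/- arXiv:1703.07912 — 2 statements merged into one kernel-verified Lean document; each statement's English description precedes it below -/
import Mathlib

section
/- Let a ≥ 0 and b ≥ 0 be real numbers and let P > 0 satisfy ln(a·P² + b·P + 1) ≥ 2. Then the function g(Q) = Q / ln(a·Q² + b·Q + 1) is differentiable at P and its derivative at P is strictly positive. Consequently g is strictly increasing on the set {Q > 0 : ln(a·Q² + b·Q + 1) ≥ 2}. -/
/-!
Write `q(Q) = a·Q² + b·Q + 1`. The derivative of `Q / ln q(Q)` has the sign of
`ln q(Q) - Q·q'(Q)/q(Q)`, and `Q·q'(Q) = 2aQ² + bQ < 2·q(Q)` for `Q ≥ 0`, so the derivative is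
positive as soon as `ln q(Q) ≥ 2`. Since `q` is increasing on `[0, ∞)`, the region where
`ln q ≥ 2` is an interval, on which a positive derivative gives strict monotonicity.
-/

open Set Real

theorem hasDerivAt_id_div_log {f : ℝ → ℝ} {f' x : ℝ} (hf : HasDerivAt f f' x) (hfx : f x ≠ 0)
    (hlog : log (f x) ≠ 0) :
    HasDerivAt (fun Q => Q / log (f Q)) ((log (f x) - x * (f' / f x)) / log (f x) ^ 2) x := by
  have h := (hasDerivAt_id' x).div (hf.log hfx) hlog
  rwa [one_mul] at h

theorem id_div_log_deriv_pos {y y' x : ℝ} (hy : 0 < y) (hlt : x * y' < log y * y)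
    (hlog : log y ≠ 0) : 0 < (log y - x * (y' / y)) / log y ^ 2 := by
  have : x * (y' / y) < log y := by
    rwa [mul_div_assoc', div_lt_iff₀ hy]
  have := sub_pos.mpr this
  positivity

theorem hasDerivAt_quadratic (a b Q : ℝ) :
    HasDerivAt (fun Q => a * Q ^ 2 + b * Q + 1) (2 * a * Q + b) Q := by
  simpa [mul_comm, mul_left_comm] using
    (((hasDerivAt_pow 2 Q).const_mul a).add ((hasDerivAt_id Q).const_mul b)).add_const 1

section Quadratic

variable {a b : ℝ}

theorem mul_deriv_quadratic_lt (hb : 0 ≤ b) {Q : ℝ} (hQ : 0 ≤ Q) :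
    Q * (2 * a * Q + b) < 2 * (a * Q ^ 2 + b * Q + 1) := by
  nlinarith [mul_nonneg hb hQ]

theorem monotoneOn_log_quadratic (ha : 0 ≤ a) (hb : 0 ≤ b) :
    MonotoneOn (fun Q => log (a * Q ^ 2 + b * Q + 1)) (Ici 0) := by
  intro x (hx : 0 ≤ x) y _ hxy
  apply log_le_log (by positivity)
  gcongr

theorem ordConnected_log_quadratic_ge (ha : 0 ≤ a) (hb : 0 ≤ b) (c : ℝ) :
    OrdConnected {Q : ℝ | 0 < Q ∧ c ≤ log (a * Q ^ 2 + b * Q + 1)} := by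
  refine ⟨fun x hx y _ z hz => ⟨hx.1.trans_le hz.1, hx.2.trans ?_⟩⟩
  exact monotoneOn_log_quadratic ha hb (mem_Ici.2 hx.1.le)
    (mem_Ici.2 (hx.1.le.trans hz.1)) hz.1

theorem differentiableAt_id_div_log_quadratic_and_deriv_pos (ha : 0 ≤ a) (hb : 0 ≤ b)
    {Q : ℝ} (hQ : 0 < Q) (hln : 2 ≤ log (a * Q ^ 2 + b * Q + 1)) :
    DifferentiableAt ℝ (fun Q : ℝ => Q / log (a * Q ^ 2 + b * Q + 1)) Q ∧
      0 < deriv (fun Q : ℝ => Q / log (a * Q ^ 2 + b * Q + 1)) Q := by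
  have hq : 0 < a * Q ^ 2 + b * Q + 1 := by positivity
  have hlog : log (a * Q ^ 2 + b * Q + 1) ≠ 0 := by positivity
  have hlt : Q * (2 * a * Q + b) < log (a * Q ^ 2 + b * Q + 1) * (a * Q ^ 2 + b * Q + 1) :=
    (mul_deriv_quadratic_lt hb hQ.le).trans_le (by gcongr)
  have hg := hasDerivAt_id_div_log (hasDerivAt_quadratic a b Q) hq.ne' hlog
  exact ⟨hg.differentiableAt, hg.deriv ▸ id_div_log_deriv_pos hq hlt hlog⟩

end Quadratic

/-- High-power monotonicity of the MIMO energy cost `g(Q) = Q / ln(a·Q² + b·Q + 1)`: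
at any `P > 0` with `ln(a·P² + b·P + 1) ≥ 2`, `g` is differentiable with strictly
positive derivative, and `g` is strictly increasing on
`{Q > 0 : ln(a·Q² + b·Q + 1) ≥ 2}`. -/
theorem stmt_9 (a b : ℝ) (ha : 0 ≤ a) (hb : 0 ≤ b) (P : ℝ) (hP : 0 < P)
    (hln : 2 ≤ Real.log (a * P ^ 2 + b * P + 1)) :
    (DifferentiableAt ℝ (fun Q : ℝ => Q / Real.log (a * Q ^ 2 + b * Q + 1)) P ∧
      0 < deriv (fun Q : ℝ => Q / Real.log (a * Q ^ 2 + b * Q + 1)) P) ∧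
    StrictMonoOn (fun Q : ℝ => Q / Real.log (a * Q ^ 2 + b * Q + 1))
      {Q : ℝ | 0 < Q ∧ 2 ≤ Real.log (a * Q ^ 2 + b * Q + 1)} := by
  have hderiv := fun {Q : ℝ} (hQ : 0 < Q ∧ 2 ≤ log (a * Q ^ 2 + b * Q + 1)) =>
    differentiableAt_id_div_log_quadratic_and_deriv_pos ha hb hQ.1 hQ.2
  refine ⟨hderiv ⟨hP, hln⟩, ?_⟩
  apply strictMonoOn_of_deriv_pos (ordConnected_log_quadratic_ge ha hb 2).convex
  · exact fun Q hQ => (hderiv hQ).1.continuousAt.continuousWithinAt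
  · exact fun Q hQ => (hderiv (interior_subset (a := Q) hQ)).2
end

section
/- Let T > 0, R ∈ ℝ, let γ : ℝ → ℝ be measurable with γ(t) > 0 for all t ∈ [0, T], and let η > 0. Define the water-filling power P*(t) = max(η − 1/γ(t), 0). Assume P* and t ↦ log₂(1 + γ(t)·P*(t)) are integrable on [0, T] and that ∫₀ᵀ log₂(1 + γ(t)·P*(t)) dt = R. Then for every measurable P : ℝ → ℝ with P(t) ≥ 0 on [0, T], with P and t ↦ log₂(1 + γ(t)·P(t)) integrable on [0, T], and satisfying ∫₀ᵀ log₂(1 + γ(t)·P(t)) dt ≥ R, one has ∫₀ᵀ P(t) dt ≥ ∫₀ᵀ P*(t) dt. -/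
open MeasureTheory

lemma waterfill_key (g η x p : ℝ) (hg : 0 < g) (hη : 0 < η) (hx : 0 ≤ x)
    (hp : p = max (η - 1 / g) 0) :
    η * Real.log (1 + g * x) - η * Real.log (1 + g * p) ≤ x - p := by
  have hp0 : 0 ≤ p := hp ▸ le_max_right _ _
  have hbx : 0 < 1 + g * x := by nlinarith
  have hbp : 0 < 1 + g * p := by nlinarith
  have hlog : Real.log (1 + g * x) - Real.log (1 + g * p) ≤
      ((1 + g * x) - (1 + g * p)) / (1 + g * p) := by
    rw [← Real.log_div (ne_of_gt hbx) (ne_of_gt hbp)]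
    have h := Real.log_le_sub_one_of_pos (div_pos hbx hbp)
    have : (1 + g * x) / (1 + g * p) - 1 = ((1 + g * x) - (1 + g * p)) / (1 + g * p) := by
      field_simp
    linarith
  rcases le_or_gt (1 / g) η with hcase | hcase
  · have hpe : p = η - 1 / g := by rw [hp, max_eq_left]; linarith
    have hgp : 1 + g * p = g * η := by
      rw [hpe]; field_simp; ring
    have : ((1 + g * x) - (1 + g * p)) / (1 + g * p) = (x - p) / η := by
      rw [hgp, hpe]; field_simp; ring
    rw [this] at hlog
    have := mul_le_mul_of_nonneg_left hlog hη.le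
    calc η * Real.log (1 + g * x) - η * Real.log (1 + g * p)
        = η * (Real.log (1 + g * x) - Real.log (1 + g * p)) := by ring
      _ ≤ η * ((x - p) / η) := this
      _ = x - p := by field_simp
  · have hpe : p = 0 := by rw [hp, max_eq_right]; nlinarith [one_div_pos.mpr hg]
    have hgη : η * g ≤ 1 := ((lt_div_iff₀ hg).mp (by linarith : η < 1 / g)).le
    rw [hpe] at hlog ⊢
    simp only [mul_zero, add_zero, Real.log_one, sub_zero] at hlog ⊢
    have : Real.log (1 + g * x) ≤ g * x := by
      have : (1 + g * x - 1) / 1 = g * x := by ring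
      linarith [hlog, this.symm ▸ hlog]
    nlinarith [mul_le_mul_of_nonneg_left this hη.le]

/-- Proposition 1 (SIMO case): the water-filling allocation
`P*(t) = (η − 1/γ(t))⁺` minimizes the total transmit power among all nonnegative
power allocations meeting the total-capacity constraint
`∫₀ᵀ log₂(1 + γ(t)·P(t)) dt ≥ R`. -/
theorem stmt_11 (T R η : ℝ) (hT : 0 < T) (hη : 0 < η)
    (γ : ℝ → ℝ) (hγmeas : Measurable γ) (hγpos : ∀ t ∈ Set.Icc 0 T, 0 < γ t)
    (Pstar : ℝ → ℝ) (hPstar : ∀ t, Pstar t = max (η - 1 / γ t) 0)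
    (hPstarInt : IntegrableOn Pstar (Set.Icc 0 T))
    (hCstarInt : IntegrableOn (fun t => Real.logb 2 (1 + γ t * Pstar t)) (Set.Icc 0 T))
    (hCstar : ∫ t in Set.Icc 0 T, Real.logb 2 (1 + γ t * Pstar t) = R) :
    ∀ P : ℝ → ℝ, Measurable P → (∀ t ∈ Set.Icc 0 T, 0 ≤ P t) →
      IntegrableOn P (Set.Icc 0 T) →
      IntegrableOn (fun t => Real.logb 2 (1 + γ t * P t)) (Set.Icc 0 T) →
      (∫ t in Set.Icc 0 T, Real.logb 2 (1 + γ t * P t)) ≥ R →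
      (∫ t in Set.Icc 0 T, P t) ≥ ∫ t in Set.Icc 0 T, Pstar t := by
  intro P hPmeas hPpos hPInt hCInt hC
  set c : ℝ := η * Real.log 2 with hc
  have hlog2 : (0:ℝ) < Real.log 2 := Real.log_pos (by norm_num)
  have hcpos : 0 < c := mul_pos hη hlog2
  -- pointwise inequality
  have hpt : ∀ t ∈ Set.Icc 0 T,
      c * (Real.logb 2 (1 + γ t * P t) - Real.logb 2 (1 + γ t * Pstar t)) ≤ P t - Pstar t := by
    intro t ht
    have key := waterfill_key (γ t) η (P t) (Pstar t) (hγpos t ht) hη (hPpos t ht) (hPstar t)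
    have : c * (Real.logb 2 (1 + γ t * P t) - Real.logb 2 (1 + γ t * Pstar t))
        = η * Real.log (1 + γ t * P t) - η * Real.log (1 + γ t * Pstar t) := by
      simp only [Real.logb, hc]
      field_simp
    linarith [this ▸ key]
  -- integrate
  have hInt1 : IntegrableOn (fun t =>
      c * (Real.logb 2 (1 + γ t * P t) - Real.logb 2 (1 + γ t * Pstar t))) (Set.Icc 0 T) :=
    (hCInt.sub hCstarInt).const_mul c
  have hInt2 : IntegrableOn (fun t => P t - Pstar t) (Set.Icc 0 T) := hPInt.sub hPstarInt
  have hmono := setIntegral_mono_on hInt1 hInt2 measurableSet_Icc hpt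
  rw [integral_sub hPInt hPstarInt] at hmono
  rw [integral_const_mul, integral_sub hCInt hCstarInt, hCstar] at hmono
  have : 0 ≤ c * ((∫ t in Set.Icc 0 T, Real.logb 2 (1 + γ t * P t)) - R) :=
    mul_nonneg hcpos.le (by linarith)
  linarith
end
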